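/- arXiv:2205.04953 — 5 statements merged into one kernel-verified Lean document; each statement's English description precedes it below -/
import Mathlib

section
/- If graph G has a proper (p:q)-colouring and graph H has a proper (q:r)-colouring, then the strong product G ⊠ H has a proper (p:r)-colouring. -/
open SimpleGraph

/-- The strong product of two simple graphs. -/
def strongProd {α β : Type*} (G : SimpleGraph α) (H : SimpleGraph β) :
    SimpleGraph (α × β) where
  Adj x y := x ≠ y ∧ (x.1 = y.1 ∨ G.Adj x.1 y.1) ∧ (x.2 = y.2 ∨ H.Adj x.2 y.2)
  symm := ⟨fun x y => by
    rintro ⟨h1, h2, h3⟩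
    exact ⟨h1.symm, h2.imp Eq.symm (fun h => G.adj_symm h), h3.imp Eq.symm (fun h => H.adj_symm h)⟩⟩
  loopless := ⟨fun x => by simp⟩

/-- The strong product of a family of simple graphs. -/
def strongProdPi {d : ℕ} {V : Fin d → Type*} (G : ∀ i, SimpleGraph (V i)) :
    SimpleGraph (∀ i, V i) where
  Adj x y := x ≠ y ∧ ∀ i, x i = y i ∨ (G i).Adj (x i) (y i)
  symm := ⟨fun x y => fun ⟨h1, h2⟩ => ⟨h1.symm, fun i => (h2 i).imp Eq.symm (fun h => (G i).adj_symm h)⟩⟩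
  loopless := ⟨fun x => by simp⟩

/-- Every connected component of the subgraph of `G` induced on `S` has at most `c`
vertices. -/
def ClusterBound {α : Type*} (G : SimpleGraph α) (S : Set α) (c : ℕ) : Prop :=
  ∀ v : S, ((G.induce S).connectedComponentMk v).supp.ncard ≤ c

/-- `G` has a `k`-colouring with clustering `c`. -/
def HasClusteredColoring {α : Type*} (G : SimpleGraph α) (k c : ℕ) : Prop :=
  ∃ f : α → Fin k, ∀ i : Fin k, ClusterBound G {v | f v = i} c

/-- `f` is a `(p:q)`-colouring: each vertex gets a `q`-element subset of `Fin p`. -/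
def IsPQColoring {α : Type*} (p q : ℕ) (f : α → Finset (Fin p)) : Prop :=
  ∀ v, (f v).card = q

/-- `f` is a proper `(p:q)`-colouring of `G`. -/
def IsProperPQColoring {α : Type*} (G : SimpleGraph α) (p q : ℕ)
    (f : α → Finset (Fin p)) : Prop :=
  IsPQColoring p q f ∧ ∀ ⦃x y⦄, G.Adj x y → Disjoint (f x) (f y)

/-- The set-colouring `f` has clustering `c`: for each colour, each monochromatic
component has at most `c` vertices. -/
def PQClusterBound {α : Type*} (G : SimpleGraph α) {p : ℕ}
    (f : α → Finset (Fin p)) (c : ℕ) : Prop :=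
  ∀ i : Fin p, ClusterBound G {v | i ∈ f v} c

/-- `G` has a `(p:q)`-colouring with clustering `c`. -/
def HasPQClusteredColoring {α : Type*} (G : SimpleGraph α) (p q c : ℕ) : Prop :=
  ∃ f : α → Finset (Fin p), IsPQColoring p q f ∧ PQClusterBound G f c

/-- `ord` is a consistent `(p:q)`-colouring of `G` (each vertex's `q` colours are ordered,
with the `i`-th colour of `x` different from the `j`-th colour of `y` for every edge `xy`
and all distinct `i, j`). -/
def IsConsistentPQColoring {α : Type*} (G : SimpleGraph α) (p q : ℕ)
    (ord : α → Fin q → Fin p) : Prop :=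
  (∀ v, Function.Injective (ord v)) ∧
    ∀ ⦃x y⦄, G.Adj x y → ∀ i j : Fin q, i ≠ j → ord x i ≠ ord y j

/-- The colour set of a vertex in an ordered colouring. -/
def ordColors {α : Type*} {p q : ℕ} (ord : α → Fin q → Fin p) (v : α) : Finset (Fin p) :=
  Finset.image (ord v) Finset.univ

/-- `G` has a consistent `(p:q)`-colouring with clustering `c`. -/
def HasConsistentClusteredColoring {α : Type*} (G : SimpleGraph α) (p q c : ℕ) : Prop :=
  ∃ ord : α → Fin q → Fin p, IsConsistentPQColoring G p q ord ∧
    PQClusterBound G (ordColors ord) c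

/-- The fractional chromatic number of `G`: the infimum of `p/q` over proper
`(p:q)`-colourings of `G`. -/
noncomputable def fracChrom {α : Type*} (G : SimpleGraph α) : ℝ :=
  sInf {t : ℝ | ∃ p q : ℕ, 0 < q ∧
    (∃ f : α → Finset (Fin p), IsProperPQColoring G p q f) ∧ t = (p : ℝ) / q}

/-- The independence number of `G`. -/
noncomputable def indepNum {α : Type*} (G : SimpleGraph α) : ℕ :=
  sSup {n | ∃ s : Finset α, (∀ x ∈ s, ∀ y ∈ s, ¬ G.Adj x y) ∧ s.card = n}

/-! Identify the `q` colours of `H` at each vertex `v` of `G` with the `q` colours `f v`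
in order, and colour `(v, x)` by the image of `g x`. Vertices adjacent in the `G`-coordinate
get colours from the disjoint sets `f v` and `f w`; otherwise they share `v` and are adjacent
in `H`, so their colours are images of disjoint sets under one injection. -/

section Substitution

variable {α β : Type*} {p q r : ℕ} (f : α → Finset (Fin p)) (hf : IsPQColoring p q f)
  (g : β → Finset (Fin q))

def substColoring : α × β → Finset (Fin p) :=
  fun vx => (g vx.2).map ((f vx.1).orderEmbOfFin (hf vx.1)).toEmbedding

lemma isPQColoring_substColoring (hg : IsPQColoring q r g) :
    IsPQColoring p r (substColoring f hf g) :=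
  fun vx => (Finset.card_map _).trans (hg vx.2)

lemma substColoring_subset (vx : α × β) : substColoring f hf g vx ⊆ f vx.1 := by
  intro c hc
  obtain ⟨i, -, rfl⟩ := Finset.mem_map.1 hc
  exact (f vx.1).orderEmbOfFin_mem (hf vx.1) i

lemma disjoint_substColoring_of_fst_eq {v : α} {x y : β} (hxy : Disjoint (g x) (g y)) :
    Disjoint (substColoring f hf g (v, x)) (substColoring f hf g (v, y)) :=
  (Finset.disjoint_map _).2 hxy

lemma disjoint_substColoring_of_disjoint_fst {vx wy : α × β}
    (hvw : Disjoint (f vx.1) (f wy.1)) :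
    Disjoint (substColoring f hf g vx) (substColoring f hf g wy) :=
  hvw.mono (substColoring_subset f hf g vx) (substColoring_subset f hf g wy)

end Substitution

theorem stmt3 {α β : Type*} (G : SimpleGraph α) (H : SimpleGraph β) (p q r : ℕ)
    (hG : ∃ f : α → Finset (Fin p), IsProperPQColoring G p q f)
    (hH : ∃ g : β → Finset (Fin q), IsProperPQColoring H q r g) :
    ∃ h : α × β → Finset (Fin p), IsProperPQColoring (strongProd G H) p r h := by
  obtain ⟨f, hf, hf_adj⟩ := hG
  obtain ⟨g, hg, hg_adj⟩ := hH
  refine ⟨substColoring f hf g, isPQColoring_substColoring f hf g hg, ?_⟩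
  rintro ⟨v, x⟩ ⟨w, y⟩ ⟨hne, rfl | hvw, hxy⟩
  · obtain rfl | hxy := hxy
    · exact absurd rfl hne
    · exact disjoint_substColoring_of_fst_eq f hf g (hg_adj hxy)
  · exact disjoint_substColoring_of_disjoint_fst f hf g (hf_adj hvw)
end

section
/- For all finite graphs G₁ and G₂, the fractional chromatic number of the strong product satisfies χ_f(G₁ ⊠ G₂) ≤ χ_f(G₁)·χ_f(G₂). -/
open SimpleGraph

/-! If `f₁` and `f₂` are proper `(p₁:q₁)`- and `(p₂:q₂)`-colourings, then `(x, y) ↦ f₁ x × f₂ y`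
is a proper `(p₁p₂:q₁q₂)`-colouring of `G₁ ⊠ G₂`: adjacent vertices of the strong product are
adjacent in at least one coordinate, where the colour sets, hence their products, are disjoint.
So `χ_f(G₁ ⊠ G₂) ≤ (p₁/q₁)(p₂/q₂)`, and taking infima of the nonnegative ratios gives the bound. -/

open Pointwise in
theorem Real.le_mul_sInf {a c : ℝ} {t : Set ℝ} (ha : 0 ≤ a) (ht : t.Nonempty)
    (h : ∀ b ∈ t, c ≤ a * b) : c ≤ a * sInf t := by
  rw [← smul_eq_mul, ← Real.sInf_smul_of_nonneg ha]
  exact le_csInf ht.smul_set (by rintro _ ⟨b, hb, rfl⟩; exact h b hb)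

theorem Real.le_sInf_mul_sInf {c : ℝ} {s t : Set ℝ} (hs : s.Nonempty) (ht : t.Nonempty)
    (hs₀ : ∀ a ∈ s, 0 ≤ a) (ht₀ : ∀ b ∈ t, 0 ≤ b) (h : ∀ a ∈ s, ∀ b ∈ t, c ≤ a * b) :
    c ≤ sInf s * sInf t := by
  rw [mul_comm]
  refine Real.le_mul_sInf (Real.sInf_nonneg ht₀) hs fun a ha => ?_
  rw [mul_comm]
  exact Real.le_mul_sInf (hs₀ a ha) ht (h a ha)

section Colorings

variable {α β : Type*} {G : SimpleGraph α} {G₁ : SimpleGraph α} {G₂ : SimpleGraph β}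

def fracRatios (G : SimpleGraph α) : Set ℝ :=
  {t : ℝ | ∃ p q : ℕ, 0 < q ∧ (∃ f : α → Finset (Fin p), IsProperPQColoring G p q f) ∧
    t = (p : ℝ) / q}

theorem fracChrom_eq_sInf_fracRatios : fracChrom G = sInf (fracRatios G) := rfl

theorem fracRatios_nonneg : ∀ t ∈ fracRatios G, 0 ≤ t := by
  rintro _ ⟨p, q, -, -, rfl⟩
  positivity

theorem fracChrom_le {p q : ℕ} (hq : 0 < q) {f : α → Finset (Fin p)}
    (hf : IsProperPQColoring G p q f) : fracChrom G ≤ p / q :=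
  csInf_le ⟨0, fracRatios_nonneg⟩ ⟨p, q, hq, ⟨f, hf⟩, rfl⟩

theorem IsProperPQColoring.singleton_equivFin [Finite α] :
    IsProperPQColoring G (Nat.card α) 1 fun v => {Finite.equivFin α v} :=
  ⟨fun _ => Finset.card_singleton _, fun _ _ hxy => Finset.disjoint_singleton.2
    fun h => hxy.ne ((Finite.equivFin α).injective h)⟩

theorem fracRatios_nonempty [Finite α] : (fracRatios G).Nonempty :=
  ⟨_, _, 1, one_pos, ⟨_, IsProperPQColoring.singleton_equivFin⟩, rfl⟩

def prodColoring {p₁ p₂ : ℕ} (f₁ : α → Finset (Fin p₁)) (f₂ : β → Finset (Fin p₂))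
    (v : α × β) : Finset (Fin (p₁ * p₂)) :=
  (f₁ v.1 ×ˢ f₂ v.2).map finProdFinEquiv.toEmbedding

theorem IsProperPQColoring.prodColoring {p₁ q₁ p₂ q₂ : ℕ} {f₁ : α → Finset (Fin p₁)}
    {f₂ : β → Finset (Fin p₂)} (hf₁ : IsProperPQColoring G₁ p₁ q₁ f₁)
    (hf₂ : IsProperPQColoring G₂ p₂ q₂ f₂) :
    IsProperPQColoring (strongProd G₁ G₂) (p₁ * p₂) (q₁ * q₂) (prodColoring f₁ f₂) := by
  refine ⟨fun v => by simp only [_root_.prodColoring, Finset.card_map, Finset.card_product,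
    hf₁.1 v.1, hf₂.1 v.2], ?_⟩
  rintro ⟨x₁, x₂⟩ ⟨y₁, y₂⟩ ⟨hne, h₁, h₂⟩
  rw [_root_.prodColoring, _root_.prodColoring, Finset.disjoint_map, Finset.disjoint_product]
  rcases h₁ with rfl | h₁
  · rcases h₂ with rfl | h₂
    · exact absurd rfl hne
    · exact .inr (hf₂.2 h₂)
  · exact .inl (hf₁.2 h₁)

end Colorings

theorem stmt4 {α β : Type*} [Fintype α] [Fintype β] (G₁ : SimpleGraph α) (G₂ : SimpleGraph β) :
    fracChrom (strongProd G₁ G₂) ≤ fracChrom G₁ * fracChrom G₂ := by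
  rw [fracChrom_eq_sInf_fracRatios (G := G₁), fracChrom_eq_sInf_fracRatios (G := G₂)]
  refine Real.le_sInf_mul_sInf fracRatios_nonempty fracRatios_nonempty fracRatios_nonneg
    fracRatios_nonneg ?_
  rintro _ ⟨p₁, q₁, hq₁, ⟨f₁, hf₁⟩, rfl⟩ _ ⟨p₂, q₂, hq₂, ⟨f₂, hf₂⟩, rfl⟩
  calc fracChrom (strongProd G₁ G₂) ≤ ((p₁ * p₂ : ℕ) : ℝ) / (q₁ * q₂ : ℕ) :=
        fracChrom_le (Nat.mul_pos hq₁ hq₂) (hf₁.prodColoring hf₂)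
    _ = p₁ / q₁ * (p₂ / q₂) := by push_cast; exact (div_mul_div_comm ..).symm
end

section
/- If a graph G has a proper (p:q)-colouring and a graph H has a (q:r)-colouring with clustering c, then G ⊠ H has a (p:r)-colouring with clustering c. -/
open SimpleGraph

/-!
List the colours of `f a` in increasing order as `e a : Fin q ↪ Fin p` and give the vertex
`(a, b)` of `G ⊠ H` the set `e a '' g b`. Since `f` is proper, two adjacent vertices of `G ⊠ H`
sharing a colour have the same first coordinate, so every monochromatic component lies in a
single fiber `{a} × β`, where it is a copy of a monochromatic component of `H` under `g`.
-/

namespace SimpleGraph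

variable {V W : Type*} {G₁ : SimpleGraph V} {G₂ : SimpleGraph W}

theorem Hom.supp_connectedComponentMk_eq_image (φ : G₁ →g G₂)
    (hlift : ∀ u w, G₂.Adj (φ u) w → ∃ u', G₁.Adj u u' ∧ φ u' = w) (v : V) :
    (G₂.connectedComponentMk (φ v)).supp = φ '' (G₁.connectedComponentMk v).supp := by
  have lift_walk : ∀ {x y : W} (_ : G₂.Walk x y) (u : V), φ u = x →
      ∃ u', G₁.Reachable u u' ∧ φ u' = y := by
    intro x y p
    induction p with
    | nil => exact fun u hu => ⟨u, .rfl, hu⟩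
    | cons hadj _ ih =>
      rintro u rfl
      obtain ⟨u', hu', rfl⟩ := hlift u _ hadj
      obtain ⟨u'', hreach, hu''⟩ := ih u' rfl
      exact ⟨u'', hu'.reachable.trans hreach, hu''⟩
  ext w
  simp only [ConnectedComponent.mem_supp_iff, ConnectedComponent.eq, Set.mem_image]
  constructor
  · rintro ⟨p⟩
    obtain ⟨u, hreach, rfl⟩ := lift_walk p.reverse v rfl
    exact ⟨u, hreach.symm, rfl⟩
  · rintro ⟨u, hreach, rfl⟩
    exact hreach.map φ

end SimpleGraph

section StrongProduct

variable {α β : Type*} (G : SimpleGraph α) (H : SimpleGraph β)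

def strongProdFiberHom (S : Set (α × β)) (a : α) :
    H.induce {b | (a, b) ∈ S} →g (strongProd G H).induce S where
  toFun y := ⟨(a, y), y.2⟩
  map_rel' h := ⟨fun heq => H.ne_of_adj h (congrArg Prod.snd heq), Or.inl rfl, Or.inr h⟩

variable {G H}

theorem strongProdFiberHom_injective (S : Set (α × β)) (a : α) :
    Function.Injective (strongProdFiberHom G H S a) :=
  fun _ _ h => Subtype.ext (congrArg (fun x : S => x.1.2) h)

theorem ClusterBound.strongProd_of_fibers {S : Set (α × β)} {c : ℕ}
    (hS : ∀ x ∈ S, ∀ y ∈ S, (strongProd G H).Adj x y → x.1 = y.1)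
    (hfiber : ∀ a, ClusterBound H {b | (a, b) ∈ S} c) :
    ClusterBound (strongProd G H) S c := by
  rintro ⟨⟨a, b⟩, hab⟩
  have hlift : ∀ u w, ((strongProd G H).induce S).Adj (strongProdFiberHom G H S a u) w →
      ∃ u', (H.induce {b | (a, b) ∈ S}).Adj u u' ∧ strongProdFiberHom G H S a u' = w := by
    rintro u ⟨⟨a', b'⟩, hw⟩ hadj
    obtain rfl : a = a' := hS _ u.2 _ hw hadj
    have hH : H.Adj u b' := hadj.2.2.resolve_left fun h => hadj.1 (Prod.ext rfl h)
    exact ⟨⟨b', hw⟩, hH, rfl⟩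
  change (((strongProd G H).induce S).connectedComponentMk
    (strongProdFiberHom G H S a ⟨b, hab⟩)).supp.ncard ≤ c
  rw [Hom.supp_connectedComponentMk_eq_image _ hlift,
    Set.ncard_image_of_injective _ (strongProdFiberHom_injective S a)]
  exact hfiber a ⟨b, hab⟩

end StrongProduct

theorem IsProperPQColoring.fst_eq_of_strongProd_adj {α β : Type*} {G : SimpleGraph α}
    {H : SimpleGraph β} {p q : ℕ} {f : α → Finset (Fin p)} (hf : IsProperPQColoring G p q f)
    {x y : α × β} {i : Fin p} (hx : i ∈ f x.1) (hy : i ∈ f y.1) (hxy : (strongProd G H).Adj x y) :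
    x.1 = y.1 :=
  hxy.2.1.resolve_right fun hadj => Finset.disjoint_left.1 (hf.2 hadj) hx hy

theorem stmt9 {α β : Type*} (G : SimpleGraph α) (H : SimpleGraph β) (p q r c : ℕ)
    (hG : ∃ f : α → Finset (Fin p), IsProperPQColoring G p q f)
    (hH : HasPQClusteredColoring H q r c) :
    HasPQClusteredColoring (strongProd G H) p r c := by
  obtain ⟨f, hf⟩ := hG
  obtain ⟨g, hg, hgc⟩ := hH
  let e : α → Fin q ↪ Fin p := fun a => ((f a).orderEmbOfFin (hf.1 a)).toEmbedding
  have he : ∀ a j, e a j ∈ f a := fun a => (f a).orderEmbOfFin_mem (hf.1 a)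
  refine ⟨fun x => (g x.2).map (e x.1), fun x => (Finset.card_map _).trans (hg x.2), fun i => ?_⟩
  refine ClusterBound.strongProd_of_fibers (fun x hx y hy hxy => ?_) (fun a => ?_)
  · obtain ⟨j, -, rfl⟩ := Finset.mem_map.1 hx
    obtain ⟨k, -, hk⟩ := Finset.mem_map.1 hy
    exact hf.fst_eq_of_strongProd_adj (he _ j) (hk ▸ he _ k) hxy
  · rintro ⟨b, hb⟩
    obtain ⟨j, -, rfl⟩ := Finset.mem_map.1 hb
    have hfiber : {b | j ∈ g b} = {b | e a j ∈ (g b).map (e a)} :=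
      Set.ext fun _ => (Finset.mem_map' _).symm
    exact (hfiber ▸ hgc j) ⟨b, hb⟩
end

section
/- If a graph G has a k-colouring with clustering c and P is a path, then the strong product G ⊠ P has a (k+1)-colouring with clustering c·k. -/
open SimpleGraph

/-! Colour the vertex `(v, j)` of `G ⊠ P` by the colour that the path vertex `j` holds in slot
`f v`, where `f` is the clustered colouring of `G`. The path vertex `j` holds the residues
modulo `k + 1` of its window `j + 1, …, j + k`, the window point congruent to `a` modulo `k`
sitting in slot `a`. Windows of adjacent path vertices overlap in all but one point, so this is a
consistent `(k+1:k)`-colouring of the path; and colour `j mod (k + 1)` is missing at `j`, so its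
monochromatic runs have at most `k` vertices. Consistency makes the slot, hence the `G`-colour,
constant along a monochromatic component of the product, which is therefore a product of a
component of `G` and a run of the path. -/
namespace SimpleGraph

variable {α β : Type*} {G : SimpleGraph α} {H : SimpleGraph β}

theorem Reachable.map_of_adj (φ : α → β) (hφ : ∀ ⦃x y⦄, G.Adj x y → H.Reachable (φ x) (φ y))
    {u v : α} (h : G.Reachable u v) : H.Reachable (φ u) (φ v) := by
  rw [reachable_iff_reflTransGen] at h ⊢
  exact Relation.ReflTransGen.lift' φ
    (fun x y hxy => (reachable_iff_reflTransGen _ _).1 (hφ hxy)) _ _ h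

theorem Reachable.apply_eq_of_adj (φ : α → β) (hφ : ∀ ⦃x y⦄, G.Adj x y → φ x = φ y)
    {u v : α} (h : G.Reachable u v) : φ u = φ v :=
  reachable_bot.1 <| h.map_of_adj (H := ⊥) φ fun _ _ hxy => by rw [hφ hxy]

theorem ncard_supp_induce_of_subset {S T : Set α} (hTS : T ⊆ S)
    (hTclosed : ∀ ⦃x y⦄, x ∈ T → y ∈ S → G.Adj x y → y ∈ T) (v : T) :
    ((G.induce T).connectedComponentMk v).supp.ncard =
      ((G.induce S).connectedComponentMk (Set.inclusion hTS v)).supp.ncard := by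
  rw [← Set.ncard_image_of_injective _ (Set.inclusion_injective hTS)]
  congr 1
  ext w
  simp only [Set.mem_image, ConnectedComponent.mem_supp_iff, ConnectedComponent.eq]
  constructor
  · rintro ⟨u, hu, rfl⟩
    exact hu.map_of_adj (Set.inclusion hTS) fun x y hxy => Adj.reachable hxy
  · intro hw
    obtain ⟨hwT, r⟩ : ∃ h : w.1 ∈ T, (G.induce T).Reachable v ⟨w.1, h⟩ := by
      rw [reachable_comm, reachable_iff_reflTransGen] at hw
      induction hw with
      | refl => exact ⟨v.2, Reachable.rfl⟩
      | tail _ hadj ih =>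
        obtain ⟨hbT, r⟩ := ih
        exact ⟨hTclosed hbT (Subtype.prop _) hadj, r.trans (Adj.reachable hadj)⟩
    exact ⟨⟨w.1, hwT⟩, r.symm, rfl⟩

theorem reachable_strongProd_induce_prod_iff {A : Set α} {B : Set β} {w w' : ↥(A ×ˢ B)} :
    ((strongProd G H).induce (A ×ˢ B)).Reachable w w' ↔
      (G.induce A).Reachable (Equiv.Set.prod A B w).1 (Equiv.Set.prod A B w').1 ∧
        (H.induce B).Reachable (Equiv.Set.prod A B w).2 (Equiv.Set.prod A B w').2 := by
  constructor
  · intro h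
    refine ⟨h.map_of_adj (fun w => (Equiv.Set.prod A B w).1) ?_,
      h.map_of_adj (fun w => (Equiv.Set.prod A B w).2) ?_⟩ <;> rintro x y ⟨-, h₁, h₂⟩
    · rcases h₁ with he | hadj
      · have : (Equiv.Set.prod A B x).1 = (Equiv.Set.prod A B y).1 := Subtype.ext he
        exact this ▸ .rfl
      · exact Adj.reachable hadj
    · rcases h₂ with he | hadj
      · have : (Equiv.Set.prod A B x).2 = (Equiv.Set.prod A B y).2 := Subtype.ext he
        exact this ▸ .rfl
      · exact Adj.reachable hadj
  · rintro ⟨hA, hB⟩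
    obtain ⟨⟨u, v⟩, hu, hv⟩ := w
    obtain ⟨⟨u', v'⟩, hu', hv'⟩ := w'
    have h₁ := hA.map_of_adj (H := (strongProd G H).induce (A ×ˢ B))
      (fun x : A => ⟨(x.1, v), x.2, hv⟩) fun x y (hxy : G.Adj x y) =>
        Adj.reachable ⟨fun he => hxy.ne (Prod.ext_iff.1 he).1, Or.inr hxy, Or.inl rfl⟩
    have h₂ := hB.map_of_adj (H := (strongProd G H).induce (A ×ˢ B))
      (fun y : B => ⟨(u', y.1), hu', y.2⟩) fun x y (hxy : H.Adj x y) =>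
        Adj.reachable ⟨fun he => hxy.ne (Prod.ext_iff.1 he).2, Or.inl rfl, Or.inr hxy⟩
    exact h₁.trans h₂

theorem ncard_supp_strongProd_induce_prod {A : Set α} {B : Set β} (w : ↥(A ×ˢ B)) :
    (((strongProd G H).induce (A ×ˢ B)).connectedComponentMk w).supp.ncard =
      ((G.induce A).connectedComponentMk (Equiv.Set.prod A B w).1).supp.ncard *
        ((H.induce B).connectedComponentMk (Equiv.Set.prod A B w).2).supp.ncard := by
  rw [← Set.ncard_prod, ← Set.ncard_image_of_injective _ (Equiv.Set.prod A B).injective]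
  congr 1
  ext ⟨x, y⟩
  simp only [Equiv.image_eq_preimage_symm, Set.mem_preimage, Set.mem_prod,
    ConnectedComponent.mem_supp_iff, ConnectedComponent.eq, reachable_strongProd_induce_prod_iff,
    Equiv.apply_symm_apply]

end SimpleGraph

open SimpleGraph

theorem IsConsistentPQColoring.eq_of_apply_eq {α : Type*} {H : SimpleGraph α} {p q : ℕ}
    {ord : α → Fin q → Fin p} (hord : IsConsistentPQColoring H p q ord) {j j' : α}
    (hjj' : j = j' ∨ H.Adj j j') {i i' : Fin q} (h : ord j i = ord j' i') : i = i' := by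
  rcases hjj' with rfl | hadj
  · exact hord.1 j h
  · by_contra hne
    exact hord.2 hadj i i' hne h

theorem HasClusteredColoring.strongProd {α β : Type*} {G : SimpleGraph α} {H : SimpleGraph β}
    {k c p d : ℕ} (hG : HasClusteredColoring G k c) (hH : HasConsistentClusteredColoring H p k d) :
    HasClusteredColoring (_root_.strongProd G H) p (c * d) := by
  obtain ⟨f, hf⟩ := hG
  obtain ⟨ord, hord, hd⟩ := hH
  refine ⟨fun w => ord w.2 (f w.1), fun γ ⟨⟨v₀, j₀⟩, hw₀⟩ => ?_⟩
  set a := f v₀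
  let T := {v | f v = a} ×ˢ {j | ord j a = γ}
  have hTS : T ⊆ {w | ord w.2 (f w.1) = γ} := by
    rintro ⟨v, j⟩ ⟨hv, hj⟩
    exact (hv ▸ hj : ord j (f v) = γ)
  have hTclosed : ∀ ⦃w w'⦄, w ∈ T → ord w'.2 (f w'.1) = γ → (_root_.strongProd G H).Adj w w' →
      w' ∈ T := by
    rintro ⟨v, j⟩ ⟨v', j'⟩ ⟨hv, hj⟩ hw' ⟨-, -, hjj'⟩
    have ha : a = f v' := hord.eq_of_apply_eq hjj' (hj.trans hw'.symm)
    exact ⟨ha.symm, ha ▸ hw'⟩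
  have hYS : {j | ord j a = γ} ⊆ {j | γ ∈ ordColors ord j} :=
    fun j hj => Finset.mem_image.2 ⟨a, Finset.mem_univ _, hj⟩
  have hYclosed : ∀ ⦃j j'⦄, ord j a = γ → γ ∈ ordColors ord j' → H.Adj j j' → ord j' a = γ := by
    intro j j' hj hj' hadj
    obtain ⟨i, -, hi⟩ := Finset.mem_image.1 hj'
    rwa [hord.eq_of_apply_eq (Or.inr hadj) (hj.trans hi.symm)]
  show (((_root_.strongProd G H).induce _).connectedComponentMk
    (Set.inclusion hTS ⟨(v₀, j₀), rfl, hw₀⟩)).supp.ncard ≤ c * d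
  rw [← ncard_supp_induce_of_subset hTS hTclosed, ncard_supp_strongProd_induce_prod]
  refine Nat.mul_le_mul (hf a ⟨v₀, rfl⟩) ?_
  rw [ncard_supp_induce_of_subset hYS hYclosed]
  exact hd γ _

theorem Nat.ModEq.eq_of_lt_add {m a b : ℕ} (h : a ≡ b [MOD m]) (hab : a < b + m)
    (hba : b < a + m) : a = b :=
  h.eq_of_abs_lt (by rw [abs_sub_lt_iff]; omega)

theorem clusterBound_pathGraph {n m s : ℕ} {S : Set (Fin n)}
    (hS : ∀ j ∈ S, ¬ (m + 1) ∣ (j : ℕ) + s) : ClusterBound (pathGraph n) S m := by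
  intro j₀
  set t := ((j₀ : ℕ) + s) / (m + 1)
  have hblock : ∀ j ∈ (((pathGraph n).induce S).connectedComponentMk j₀).supp,
      ((j : ℕ) + s) / (m + 1) = t := by
    intro j hj
    rw [ConnectedComponent.mem_supp_iff, ConnectedComponent.eq] at hj
    refine hj.apply_eq_of_adj (fun j : S => ((j : ℕ) + s) / (m + 1)) fun x y hxy => ?_
    have hxy' : ((x : Fin n) : ℕ) + 1 = (y : Fin n) ∨ ((y : Fin n) : ℕ) + 1 = (x : Fin n) :=
      pathGraph_adj.1 hxy
    rcases hxy' with h | h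
    · rw [← h, add_right_comm, Nat.succ_div_of_not_dvd (by rw [add_right_comm, h]; exact hS _ y.2)]
    · rw [← h, add_right_comm, Nat.succ_div_of_not_dvd (by rw [add_right_comm, h]; exact hS _ x.2)]
  have hmaps : ∀ j ∈ (((pathGraph n).induce S).connectedComponentMk j₀).supp,
      ((j : Fin n) : ℕ) + s ∈ Set.Ioc ((m + 1) * t) ((m + 1) * t + m) := by
    intro j hj
    have hdiv := Nat.div_add_mod ((j : ℕ) + s) (m + 1)
    have hmod := Nat.mod_lt ((j : ℕ) + s) (Nat.add_one_pos m)
    rw [hblock j hj] at hdiv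
    have hne : ((j : ℕ) + s) % (m + 1) ≠ 0 := fun h => hS _ j.2 ⟨t, by omega⟩
    constructor <;> omega
  calc _ ≤ (Set.Ioc ((m + 1) * t) ((m + 1) * t + m)).ncard :=
        Set.ncard_le_ncard_of_injOn _ hmaps
          (fun x _ y _ h => Subtype.ext (Fin.ext (Nat.add_right_cancel h))) (Set.finite_Ioc _ _)
    _ = m := by simp

def windowPoint (k j a : ℕ) : ℕ := k * ((j + k - a) / k) + a

theorem windowPoint_mem_Ioc {k j a : ℕ} (ha : a < k) :
    windowPoint k j a ∈ Set.Ioc j (j + k) := by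
  have := Nat.div_add_mod (j + k - a) k
  have := Nat.mod_lt (j + k - a) (by omega : 0 < k)
  unfold windowPoint
  constructor <;> omega

theorem windowPoint_mod {k j a : ℕ} (ha : a < k) : windowPoint k j a % k = a := by
  rw [windowPoint, Nat.mul_add_mod, Nat.mod_eq_of_lt ha]

def windowColoring {n : ℕ} (k : ℕ) (j : Fin n) (a : Fin k) : Fin (k + 1) :=
  ⟨windowPoint k j a % (k + 1), Nat.mod_lt _ (Nat.add_one_pos k)⟩

theorem eq_of_windowColoring_eq {n k : ℕ} {j j' : Fin n} {a a' : Fin k}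
    (hj : (j : ℕ) ≤ j' + 1) (hj' : (j' : ℕ) ≤ j + 1)
    (h : windowColoring k j a = windowColoring k j' a') : a = a' := by
  obtain ⟨hz₁, hz₂⟩ := windowPoint_mem_Ioc (j := j) a.2
  obtain ⟨hz₁', hz₂'⟩ := windowPoint_mem_Ioc (j := j') a'.2
  have heq : windowPoint k j a = windowPoint k j' a' :=
    Nat.ModEq.eq_of_lt_add (Fin.val_eq_of_eq h) (by omega) (by omega)
  exact Fin.ext (by rw [← windowPoint_mod a.2, ← windowPoint_mod a'.2, heq])

theorem isConsistentPQColoring_windowColoring (n k : ℕ) :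
    IsConsistentPQColoring (pathGraph n) (k + 1) k (windowColoring k) := by
  refine ⟨fun j a a' h => eq_of_windowColoring_eq (by omega) (by omega) h,
    fun j j' hadj a a' hne h => hne (eq_of_windowColoring_eq ?_ ?_ h)⟩ <;>
  · rw [pathGraph_adj] at hadj; omega

theorem not_dvd_of_mem_ordColors_windowColoring {n k : ℕ} {j : Fin n} {γ : Fin (k + 1)}
    (h : γ ∈ ordColors (windowColoring k) j) : ¬ (k + 1) ∣ (j : ℕ) + (k + 1 - γ) := by
  obtain ⟨a, -, rfl⟩ := Finset.mem_image.1 h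
  intro hdvd
  set z := windowPoint k j a
  obtain ⟨hz₁, hz₂⟩ := windowPoint_mem_Ioc (j := j) a.2
  have h₁ : (j : ℕ) + (k + 1 - z % (k + 1)) ≡ 0 [MOD k + 1] := Nat.modEq_zero_iff_dvd.2 hdvd
  have h₂ : z + (k + 1 - z % (k + 1)) ≡ 0 [MOD k + 1] := by
    refine Nat.modEq_zero_iff_dvd.2 ⟨z / (k + 1) + 1, ?_⟩
    have := Nat.div_add_mod z (k + 1)
    have := Nat.mod_lt z (Nat.add_one_pos k)
    rw [mul_add]; omega
  have hjz : (j : ℕ) = z :=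
    ((h₁.trans h₂.symm).add_right_cancel' _).eq_of_lt_add (by omega) (by omega)
  omega

theorem hasConsistentClusteredColoring_pathGraph (n k : ℕ) :
    HasConsistentClusteredColoring (pathGraph n) (k + 1) k k :=
  ⟨windowColoring k, isConsistentPQColoring_windowColoring n k,
    fun _ => clusterBound_pathGraph fun _ hj => not_dvd_of_mem_ordColors_windowColoring hj⟩

theorem stmt14 {α : Type*} (G : SimpleGraph α) (k c n : ℕ)
    (h : HasClusteredColoring G k c) :
    HasClusteredColoring (strongProd G (SimpleGraph.pathGraph n)) (k + 1) (c * k) :=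
  h.strongProd (hasConsistentClusteredColoring_pathGraph n k)
end

section
/- For groups of colourings in the strong product C₅ ⊠ C₅: the independence number α(C₅ ⊠ C₅) = 5, and hence χ_f(C₅ ⊠ C₅) = χ(C₅ ⊠ C₅) = 5. -/
/-!
For an edge `{i, i + 1}` of `C₅`, the vertices of an independent set of `C₅ ⊠ C₅` lying in the
two rows `{i, i + 1} × C₅` have distinct and pairwise non-adjacent second coordinates, so there
are at most `α(C₅) = 2` of them. The five edges cover every row twice, hence `2α ≤ 10`; the
diagonal `{(i, 2i)}` attains `α = 5`. Every colour class of a proper `(p:q)`-colouring is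
independent, so `25 q ≤ α p`, i.e. `χ_f ≥ 25 / α = 5`, and `(x, y) ↦ x + 2y` is a proper
`5`-colouring, so `χ_f ≤ χ ≤ 5`.
-/

open SimpleGraph

open Finset

variable {α β : Type*} {G : SimpleGraph α} {H : SimpleGraph β}

instance [DecidableEq α] [DecidableEq β] [DecidableRel G.Adj] [DecidableRel H.Adj] :
    DecidableRel (strongProd G H).Adj :=
  fun _ _ => inferInstanceAs (Decidable (_ ∧ _ ∧ _))

theorem indepNum_eq_simpleGraph_indepNum (G : SimpleGraph α) :
    _root_.indepNum G = G.indepNum := by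
  unfold _root_.indepNum SimpleGraph.indepNum
  congr! 3 with n
  refine exists_congr fun s => ?_
  rw [isNIndepSet_iff, isIndepSet_iff]
  refine and_congr_left' ⟨fun h x hx y hy _ => h x hx y hy, fun h x hx y hy hxy => ?_⟩
  obtain rfl | hne := eq_or_ne x y
  · exact G.irrefl hxy
  · exact h hx hy hne hxy

theorem IsProperPQColoring.card_mul_le_indepNum_mul [Fintype α] {p q : ℕ}
    {f : α → Finset (Fin p)} (hf : IsProperPQColoring G p q f) :
    Fintype.card α * q ≤ G.indepNum * p := by
  classical
  have hcard : ∀ v, #(f v) = q := hf.1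
  have hclass (i : Fin p) : #{v | i ∈ f v} ≤ G.indepNum :=
    IsIndepSet.card_le_indepNum fun x hx y hy _ hxy =>
      disjoint_left.mp (hf.2 hxy) (mem_filter.1 hx).2 (mem_filter.1 hy).2
  calc Fintype.card α * q = ∑ v, #(f v) := by simp [hcard]
    _ = ∑ i : Fin p, #{v | i ∈ f v} := by
      simpa [bipartiteAbove, bipartiteBelow] using
        sum_card_bipartiteAbove_eq_sum_card_bipartiteBelow (s := univ) (t := univ)
          (fun v i => i ∈ f v)
    _ ≤ ∑ _i : Fin p, G.indepNum := sum_le_sum fun i _ => hclass i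
    _ = G.indepNum * p := by simp [mul_comm]

theorem SimpleGraph.Coloring.isProperPQColoring_singleton {n : ℕ} (C : G.Coloring (Fin n)) :
    IsProperPQColoring G n 1 fun v => {C v} :=
  ⟨fun _ => card_singleton _, fun _ _ h => disjoint_singleton.2 (C.valid h)⟩

theorem SimpleGraph.Colorable.card_le_indepNum_mul [Fintype α] {n : ℕ} (hG : G.Colorable n) :
    Fintype.card α ≤ G.indepNum * n := by
  obtain ⟨C⟩ := hG
  simpa using C.isProperPQColoring_singleton.card_mul_le_indepNum_mul

theorem fracChrom_eq_of_colorable [Fintype α] {n : ℕ} (hG : G.Colorable n)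
    (hcard : Fintype.card α = G.indepNum * n) (hα : 0 < G.indepNum) : fracChrom G = n := by
  obtain ⟨C⟩ := hG
  refine IsLeast.csInf_eq ⟨⟨n, 1, one_pos, ⟨_, C.isProperPQColoring_singleton⟩, by simp⟩, ?_⟩
  rintro _ ⟨p, q, hq, ⟨f, hf⟩, rfl⟩
  have hle := hf.card_mul_le_indepNum_mul
  rw [hcard, mul_assoc] at hle
  rw [le_div_iff₀ (by positivity)]
  exact_mod_cast Nat.le_of_mul_le_mul_left hle hα

theorem chromaticNumber_eq_of_colorable [Fintype α] {n : ℕ} (hG : G.Colorable n)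
    (hcard : Fintype.card α = G.indepNum * n) (hα : 0 < G.indepNum) :
    G.chromaticNumber = n := by
  refine le_antisymm hG.chromaticNumber_le (le_chromaticNumber_iff_colorable.2 fun m hm => ?_)
  have hle := hm.card_le_indepNum_mul
  rw [hcard] at hle
  exact_mod_cast Nat.le_of_mul_le_mul_left hle hα

theorem card_filter_fst_mem_le_indepNum_of_isClique [Finite β] [DecidableEq α] {K : Finset α}
    (hK : G.IsClique (K : Set α)) {s : Finset (α × β)} (hs : (strongProd G H).IsIndepSet s) :
    #{v ∈ s | v.1 ∈ K} ≤ H.indepNum := by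
  classical
  set t := {v ∈ s | v.1 ∈ K} with ht
  have hnot_adj : ∀ v ∈ t, ∀ w ∈ t, v ≠ w → ¬(v.2 = w.2 ∨ H.Adj v.2 w.2) := by
    intro v hv w hw hne h2
    rw [ht, mem_filter] at hv hw
    refine hs hv.1 hw.1 hne ⟨hne, ?_, h2⟩
    obtain h | h := eq_or_ne v.1 w.1
    · exact .inl h
    · exact .inr (hK hv.2 hw.2 h)
  have hinj : Set.InjOn Prod.snd (t : Set (α × β)) := fun v hv w hw h =>
    by_contra fun hne => hnot_adj v hv w hw hne (.inl h)
  rw [← card_image_of_injOn hinj]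
  refine IsIndepSet.card_le_indepNum ?_
  rintro _ hx _ hy - hxy
  obtain ⟨v, hv, rfl⟩ := mem_image.1 hx
  obtain ⟨w, hw, rfl⟩ := mem_image.1 hy
  exact hnot_adj v hv w hw (fun h => H.irrefl (h ▸ hxy)) (.inr hxy)

theorem two_mul_indepNum_strongProd_cycleGraph_le [Fintype β] (n : ℕ) (H : SimpleGraph β) :
    2 * (strongProd (cycleGraph (n + 2)) H).indepNum ≤ (n + 2) * H.indepNum := by
  classical
  obtain ⟨s, hs⟩ := (strongProd (cycleGraph (n + 2)) H).exists_isNIndepSet_indepNum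
  let c (i : Fin (n + 2)) : ℕ := #{v ∈ s | v.1 = i}
  have hedge (i : Fin (n + 2)) : c i + c (i + 1) ≤ H.indepNum := by
    have hne : i ≠ i + 1 := by simp
    have hclique : (cycleGraph (n + 2)).IsClique ({i, i + 1} : Finset _) := by
      rw [coe_pair, isClique_pair]
      exact fun _ => cycleGraph_adj.2 (.inr (add_sub_cancel_left i 1))
    have hdisj : Disjoint {v ∈ s | v.1 = i} {v ∈ s | v.1 = i + 1} :=
      disjoint_filter.2 fun _ _ h₁ h₂ => hne (h₁.symm.trans h₂)
    rw [← card_union_of_disjoint hdisj, ← filter_or]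
    simpa using card_filter_fst_mem_le_indepNum_of_isClique hclique hs.isIndepSet
  have hshift : ∑ i, c (i + 1) = ∑ i, c i :=
    Fintype.sum_equiv (Equiv.addRight 1) _ _ fun _ => rfl
  have hfiber : #s = ∑ i, c i := card_eq_sum_card_fiberwise fun v _ => mem_univ v.1
  calc 2 * (strongProd (cycleGraph (n + 2)) H).indepNum = ∑ i, (c i + c (i + 1)) := by
        rw [sum_add_distrib, hshift, ← hfiber, hs.card_eq, two_mul]
    _ ≤ ∑ _i : Fin (n + 2), H.indepNum := sum_le_sum fun i _ => hedge i
    _ = (n + 2) * H.indepNum := by simp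

theorem indepNum_cycleGraph_five_le : (cycleGraph 5).indepNum ≤ 2 := by
  have hsmall : ∀ s : Finset (Fin 5), (cycleGraph 5).IsIndepSet (s : Set (Fin 5)) → #s ≤ 2 := by
    decide
  obtain ⟨s, hs, hcard⟩ := (cycleGraph 5).exists_isNIndepSet_indepNum
  exact hcard ▸ hsmall s hs

local notation "C₅⊠C₅" => strongProd (cycleGraph 5) (cycleGraph 5)

theorem indepNum_strongProd_cycleGraph_five : (C₅⊠C₅).indepNum = 5 := by
  refine le_antisymm ?_ ?_
  · have h : 2 * (C₅⊠C₅).indepNum ≤ 5 * (cycleGraph 5).indepNum :=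
      two_mul_indepNum_strongProd_cycleGraph_le 3 (cycleGraph 5)
    have := indepNum_cycleGraph_five_le
    omega
  · let D : Finset (Fin 5 × Fin 5) := univ.image fun i => (i, 2 * i)
    have hD : (C₅⊠C₅).IsIndepSet (D : Set (Fin 5 × Fin 5)) := by decide
    calc 5 = #D := by decide
      _ ≤ _ := hD.card_le_indepNum

/- Adjacent vertices differ by some `(a, b) ∈ {-1, 0, 1}² \ {0}`, and `a + 2 * b ≢ 0 mod 5`. -/
theorem colorable_strongProd_cycleGraph_five : (C₅⊠C₅).Colorable 5 :=
  ⟨Coloring.mk (fun v => v.1 + 2 * v.2) (by decide)⟩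

theorem stmt18 :
    _root_.indepNum (strongProd (SimpleGraph.cycleGraph 5) (SimpleGraph.cycleGraph 5)) = 5 ∧
      fracChrom (strongProd (SimpleGraph.cycleGraph 5) (SimpleGraph.cycleGraph 5)) = 5 ∧
      (strongProd (SimpleGraph.cycleGraph 5) (SimpleGraph.cycleGraph 5)).chromaticNumber
        = 5 := by
  have hcard : Fintype.card (Fin 5 × Fin 5) = (C₅⊠C₅).indepNum * 5 := by
    simp [indepNum_strongProd_cycleGraph_five]
  have hpos : 0 < (C₅⊠C₅).indepNum := by simp [indepNum_strongProd_cycleGraph_five]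
  refine ⟨?_, ?_, ?_⟩
  · rw [indepNum_eq_simpleGraph_indepNum, indepNum_strongProd_cycleGraph_five]
  · exact_mod_cast fracChrom_eq_of_colorable colorable_strongProd_cycleGraph_five hcard hpos
  · exact_mod_cast chromaticNumber_eq_of_colorable colorable_strongProd_cycleGraph_five hcard hpos
end
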